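/- arXiv:2405.20880 — 3 statements merged into one kernel-verified Lean document; each statement's English description precedes it below -/
import Mathlib

section
/- Let v1 ≥ v2 > 0 and η = v2/2. With the equilibrium distributions F1(x) = η/(v2-x) (density f(x) = η/(v2-x)² on (0, v2-η], atom η/v2 at 0) and G2 as above, the probability that bidder 2's bid strictly exceeds bidder 1's bid equals v2(2v1-v2)/(4(v1-v2)²) · ( ln((2v1-v2)/v1) - v2(v1-v2)/(v1(2v1-v2)) ) for v1 > v2. -/
open intervalIntegral Real Set

/- Partial fractions: with `d = q - p`,
`1 / ((p - x)(q - x)²) = 1 / (d²(p - x)) - 1 / (d²(q - x)) - 1 / (d(q - x)²)`,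
so the integrand has an explicit logarithmic antiderivative; the theorem is its evaluation
between `0` and `v2/2` with `p = v2`, `q = v1`. -/

theorem hasDerivAt_log_sub_log_div_sub_inv {p q x : ℝ} (hpq : p ≠ q) (hp : p - x ≠ 0)
    (hq : q - x ≠ 0) :
    HasDerivAt (fun y => (log (q - y) - log (p - y)) / (q - p) ^ 2 - ((q - p) * (q - y))⁻¹)
      ((p - x) * (q - x) ^ 2)⁻¹ x := by
  have hd : q - p ≠ 0 := sub_ne_zero.mpr hpq.symm
  have hsub : ∀ c : ℝ, HasDerivAt (fun y => c - y) (-1) x := fun c =>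
    (hasDerivAt_id' x).const_sub c
  have hlog := ((((hsub q).log hq).sub ((hsub p).log hp)).div_const ((q - p) ^ 2))
  have hinv := ((hsub q).const_mul (q - p)).inv (mul_ne_zero hd hq)
  refine (hlog.sub hinv).congr_deriv ?_
  field_simp
  ring

theorem integral_inv_mul_sub_mul_sub_sq {p q a b : ℝ} (hpq : p ≠ q) (hp : p ∉ uIcc a b)
    (hq : q ∉ uIcc a b) :
    ∫ x in a..b, ((p - x) * (q - x) ^ 2)⁻¹ =
      ((log (q - b) - log (p - b)) / (q - p) ^ 2 - ((q - p) * (q - b))⁻¹) -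
        ((log (q - a) - log (p - a)) / (q - p) ^ 2 - ((q - p) * (q - a))⁻¹) := by
  have hne : ∀ {r x : ℝ}, r ∉ uIcc a b → x ∈ uIcc a b → r - x ≠ 0 := fun hr hx =>
    sub_ne_zero.mpr fun h => hr (h ▸ hx)
  refine integral_eq_sub_of_hasDerivAt
    (fun x hx => hasDerivAt_log_sub_log_div_sub_inv hpq (hne hp hx) (hne hq hx)) ?_
  refine ContinuousOn.intervalIntegrable (ContinuousOn.inv₀ (by fun_prop) fun x hx => ?_)
  exact mul_ne_zero (hne hp hx) (pow_ne_zero 2 (hne hq hx))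

theorem stmt_8 (v1 v2 : ℝ) (hv2 : 0 < v2) (hv : v2 < v1) :
    ∫ x in (0 : ℝ)..(v2 - v2 / 2),
        (v2 / 2) / (v2 - x) * ((v1 - v2 + v2 / 2) / (v1 - x) ^ 2)
      = v2 * (2 * v1 - v2) / (4 * (v1 - v2) ^ 2) *
          (Real.log ((2 * v1 - v2) / v1) - v2 * (v1 - v2) / (v1 * (2 * v1 - v2))) := by
  have hv1 : 0 < v1 := hv2.trans hv
  have h2v : 0 < 2 * v1 - v2 := by linarith
  have hd : v1 - v2 ≠ 0 := by linarith
  have hI : uIcc 0 (v2 - v2 / 2) = Icc 0 (v2 / 2) := by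
    rw [uIcc_of_le (by linarith)]
    ring_nf
  have hp : v2 ∉ uIcc 0 (v2 - v2 / 2) := by rw [hI]; exact fun h => by linarith [h.2]
  have hq : v1 ∉ uIcc 0 (v2 - v2 / 2) := by rw [hI]; exact fun h => by linarith [h.2]
  simp_rw [div_mul_div_comm, div_eq_mul_inv _ ((_ - _) * _)]
  rw [integral_const_mul, integral_inv_mul_sub_mul_sub_sq hv.ne hp hq]
  have e1 : v1 - (v2 - v2 / 2) = (2 * v1 - v2) / 2 := by ring
  have e2 : v2 - (v2 - v2 / 2) = v2 / 2 := by ring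
  rw [e1, e2, sub_zero, sub_zero, log_div h2v.ne' two_ne_zero, log_div hv2.ne' two_ne_zero,
    log_div h2v.ne' hv1.ne']
  field_simp
  ring
end

section
/- With η = v2/2 and v1 > v2, the winning probability of the low bidder, q(r) := Pr[b2 > b1] expressed as a function of the ratio r = v2/v1 ∈ (0,1), satisfies lim_{r→0} q(r) = 0 and lim_{r→1} q(r) = 3/8. -/
open Filter Set

lemma log_key : Tendsto (fun t : ℝ => (Real.log (1 + t) - t) / t ^ 2 + 1 / 2)
    (nhdsWithin 0 (Set.Ioi 0)) (nhds 0) := by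
  have hb : Tendsto (fun t : ℝ => t / (1 - t)) (nhdsWithin 0 (Set.Ioi 0)) (nhds 0) := by
    have hc : ContinuousAt (fun t : ℝ => t / (1 - t)) 0 :=
      ContinuousAt.div (by fun_prop) (by fun_prop) (by norm_num)
    have h := hc.tendsto
    norm_num at h
    exact h.mono_left nhdsWithin_le_nhds
  apply squeeze_zero_norm' ?_ hb
  filter_upwards [Ioo_mem_nhdsGT_of_mem (by norm_num : (0:ℝ) ∈ Ico (0:ℝ) 1)] with t ht
  obtain ⟨ht0, ht1⟩ := ht
  have habs : |(-t : ℝ)| < 1 := by rw [abs_neg, abs_of_pos ht0]; exact ht1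
  have h := Real.abs_log_sub_add_sum_range_le habs 2
  simp only [Finset.sum_range_succ, Finset.sum_range_zero] at h
  have h1t : (1 : ℝ) - -t = 1 + t := by ring
  rw [h1t, abs_neg, abs_of_pos ht0] at h
  have ht0' : t ≠ 0 := ne_of_gt ht0
  norm_num at h
  have h' : |Real.log (1 + t) - t + t ^ 2 / 2| ≤ t ^ 3 / (1 - t) := by
    have e : Real.log (1 + t) - t + t ^ 2 / 2 = -t + t ^ 2 / 2 + Real.log (1 + t) := by ring
    rw [e]; exact h
  have ht2 : (0:ℝ) < t ^ 2 := by positivity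
  have key : (Real.log (1 + t) - t) / t ^ 2 + 1 / 2
      = (Real.log (1 + t) - t + t ^ 2 / 2) / t ^ 2 := by
    rw [add_div]
    congr 1
    rw [div_right_comm, div_self (pow_ne_zero 2 ht0')]
  rw [Real.norm_eq_abs, key, abs_div, abs_of_pos ht2, div_le_div_iff₀ ht2 (by linarith)]
  have hmul := mul_le_mul_of_nonneg_right h' (by linarith : (0:ℝ) ≤ 1 - t)
  rw [div_mul_cancel₀ _ (by linarith : (1:ℝ) - t ≠ 0)] at hmul
  calc |Real.log (1 + t) - t + t ^ 2 / 2| * (1 - t) ≤ t ^ 3 := hmul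
    _ = t * t ^ 2 := by ring

theorem stmt_9 (q : ℝ → ℝ)
    (hq : ∀ r, q r = r * (2 - r) / (4 * (1 - r) ^ 2) *
        (Real.log (2 - r) - r * (1 - r) / (2 - r))) :
    Tendsto q (nhdsWithin 0 (Set.Ioo (0 : ℝ) 1)) (nhds 0) ∧
    Tendsto q (nhdsWithin 1 (Set.Ioo (0 : ℝ) 1)) (nhds (3 / 8)) := by
  constructor
  · have hc : ContinuousAt (fun r : ℝ => r * (2 - r) / (4 * (1 - r) ^ 2) *
        (Real.log (2 - r) - r * (1 - r) / (2 - r))) 0 := by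
      apply ContinuousAt.mul
      · exact ContinuousAt.div (by fun_prop) (by fun_prop) (by norm_num)
      · apply ContinuousAt.sub
        · exact (Real.continuousAt_log (by norm_num)).comp (by fun_prop)
        · exact ContinuousAt.div (by fun_prop) (by fun_prop) (by norm_num)
    have h := hc.tendsto
    norm_num at h
    have : Tendsto q (nhds 0) (nhds 0) := by
      convert h using 1
      funext r; exact hq r
    exact this.mono_left nhdsWithin_le_nhds
  · -- limit at 1
    set F : ℝ → ℝ := fun t => (1 - t) * (1 + t) / 4 * ((Real.log (1 + t) - t) / t ^ 2) + (1 - t) / 2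
      with hF
    have hFlim : Tendsto F (nhdsWithin 0 (Set.Ioi 0)) (nhds (3 / 8)) := by
      have h1 : Tendsto (fun t : ℝ => (Real.log (1 + t) - t) / t ^ 2)
          (nhdsWithin 0 (Set.Ioi 0)) (nhds (-(1 / 2))) := by
        have := log_key
        have h2 : Tendsto (fun t : ℝ => ((Real.log (1 + t) - t) / t ^ 2 + 1 / 2) - 1 / 2)
            (nhdsWithin 0 (Set.Ioi 0)) (nhds (0 - 1 / 2)) := this.sub tendsto_const_nhds
        simpa using h2
      have h2 : Tendsto (fun t : ℝ => (1 - t) * (1 + t) / 4)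
          (nhdsWithin 0 (Set.Ioi 0)) (nhds ((1 - 0) * (1 + 0) / 4)) :=
        ((by fun_prop : ContinuousAt (fun t : ℝ => (1 - t) * (1 + t) / 4) 0).tendsto).mono_left
          nhdsWithin_le_nhds
      have h3 : Tendsto (fun t : ℝ => (1 - t) / 2) (nhdsWithin 0 (Set.Ioi 0))
          (nhds ((1 - 0) / 2)) :=
        ((by fun_prop : ContinuousAt (fun t : ℝ => (1 - t) / 2) 0).tendsto).mono_left
          nhdsWithin_le_nhds
      have := (h2.mul h1).add h3
      convert this using 2
      norm_num
    have hmap : Tendsto (fun r : ℝ => 1 - r) (nhdsWithin 1 (Set.Ioo (0:ℝ) 1))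
        (nhdsWithin 0 (Set.Ioi 0)) := by
      apply tendsto_nhdsWithin_of_tendsto_nhds_of_eventually_within
      · have h := ((by fun_prop : ContinuousAt (fun r : ℝ => 1 - r) 1).tendsto).mono_left
          (nhdsWithin_le_nhds (s := Set.Ioo (0:ℝ) 1))
        simpa using h
      · filter_upwards [self_mem_nhdsWithin] with r hr
        exact sub_pos.mpr hr.2
    have hcomp := hFlim.comp hmap
    apply hcomp.congr'
    filter_upwards [self_mem_nhdsWithin] with r hr
    obtain ⟨hr0, hr1⟩ := hr
    have ht0 : (1 : ℝ) - r ≠ 0 := by intro h; linarith [sub_eq_zero.mp h]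
    have h2r : (2 : ℝ) - r ≠ 0 := by intro h; nlinarith [sub_eq_zero.mp h]
    show F (1 - r) = q r
    rw [hq r, hF]
    have e1 : (1 : ℝ) + (1 - r) = 2 - r := by ring
    simp only [e1]
    field_simp
    ring
end

section
/- In a finite game with 'iterated dominant strategies' — i.e., there exists an ordering of the players 1,...,n and actions a_1,...,a_n such that a_1 is strictly dominant for player 1, and for each k, a_k is a strict best response (strictly better than all alternatives) for player k given that players 1,...,k-1 play a_1,...,a_{k-1}, against all actions of players k+1,...,n — every coarse correlated equilibrium is the point mass on the profile (a_1,...,a_n). In particular (a_1,...,a_n) is the unique Nash equilibrium. -/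
open Finset

/- A finite game with "iterated dominant strategies": there is an ordering of the
players (taken to be the order of `Fin n`) and actions `a j` such that for each `k`,
`a k` is strictly better for player `k` than any alternative, whenever players before
`k` play their actions `a j`, against all actions of the later players. Then every
coarse correlated equilibrium `μ` is the point mass on `a`, and in particular `a` is
the unique pure Nash equilibrium. -/

theorem stmt_14 (n : ℕ) (S : Fin n → Type*) [∀ j, Fintype (S j)] [∀ j, Nonempty (S j)]
    [∀ j, DecidableEq (S j)]
    (u : ∀ _ : Fin n, (∀ k, S k) → ℝ)
    (a : ∀ k, S k)
    -- iterated dominance: given players before k play a, action (a k) is strictly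
    -- better for player k than any alternative, for all actions of the later players
    (hdom : ∀ (k : Fin n) (s : ∀ j, S j), (∀ j, j < k → s j = a j) → s k ≠ a k →
      u k (Function.update s k (a k)) > u k s)
    -- μ is a coarse correlated equilibrium
    (μ : (∀ j, S j) → ℝ) (hμ0 : ∀ s, 0 ≤ μ s) (hμ1 : ∑ s, μ s = 1)
    (hCCE : ∀ (j : Fin n) (s' : S j),
      ∑ s, μ s * u j s ≥ ∑ s, μ s * u j (Function.update s j s')) :
    -- μ is the point mass on the profile a
    (μ a = 1 ∧ ∀ s, s ≠ a → μ s = 0) ∧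
    -- and a is the unique pure Nash equilibrium
    (∀ s : ∀ j, S j, (∀ (j : Fin n) (s' : S j), u j (Function.update s j s') ≤ u j s) →
      s = a) := by
  -- Main claim: by strong induction on k, μ s = 0 whenever s k ≠ a k.
  have keyAux : ∀ m : ℕ, ∀ k : Fin n, k.1 < m → ∀ s : ∀ j, S j, s k ≠ a k → μ s = 0 := by
    intro m
    induction m with
    | zero => intro k hk; omega
    | succ m IHm =>
      intro k _ s hs
      have IH : ∀ j : Fin n, j < k → ∀ s : ∀ j, S j, s j ≠ a j → μ s = 0 := by
        intro j hj
        exact IHm j (by omega)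
      -- If some earlier coordinate deviates, done by IH
      by_cases hearly : ∀ j, j < k → s j = a j
      · -- the regret terms are all nonnegative, and their sum is ≤ 0
        have hCCEk := hCCE k (a k)
        have hsum : ∑ t, μ t * (u k (Function.update t k (a k)) - u k t) ≤ 0 := by
          have : ∑ t, μ t * (u k (Function.update t k (a k)) - u k t)
              = (∑ t, μ t * u k (Function.update t k (a k))) - ∑ t, μ t * u k t := by
            rw [← Finset.sum_sub_distrib]
            exact Finset.sum_congr rfl fun t _ => by ring
          rw [this]
          linarith [hCCEk]
        have hterm : ∀ t : ∀ j, S j, t ∈ Finset.univ →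
            0 ≤ μ t * (u k (Function.update t k (a k)) - u k t) := by
          intro t _
          rcases eq_or_lt_of_le (hμ0 t) with h0 | h0
          · rw [← h0]; simp
          · by_cases htearly : ∀ j, j < k → t j = a j
            · by_cases htk : t k = a k
              · have : Function.update t k (a k) = t := by
                  rw [← htk]; exact Function.update_eq_self k t
                rw [this]; simp
              · have := hdom k t htearly htk
                exact mul_nonneg h0.le (by linarith)
            · push_neg at htearly
              obtain ⟨j, hj, hja⟩ := htearly
              rw [IH j hj t hja]; simp
        have hzero := (Finset.sum_eq_zero_iff_of_nonneg hterm).mp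
          (le_antisymm hsum (Finset.sum_nonneg hterm))
        have hz := hzero s (Finset.mem_univ s)
        rcases eq_or_lt_of_le (hμ0 s) with h0 | h0
        · exact h0.symm
        · exfalso
          have hd := hdom k s hearly hs
          nlinarith
      · push_neg at hearly
        obtain ⟨j, hj, hja⟩ := hearly
        exact IH j hj s hja
  have hzero : ∀ s, s ≠ a → μ s = 0 := by
    intro s hsa
    have : ∃ k, s k ≠ a k := by
      by_contra h
      push_neg at h
      exact hsa (funext h)
    obtain ⟨k, hk⟩ := this
    exact keyAux (k.1 + 1) k (Nat.lt_succ_self _) s hk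
  have hμa : μ a = 1 := by
    have : ∑ s, μ s = μ a := by
      rw [Finset.sum_eq_single a]
      · intro t _ ht; exact hzero t ht
      · intro h; exact absurd (Finset.mem_univ a) h
    rw [this] at hμ1; exact hμ1
  refine ⟨⟨hμa, hzero⟩, ?_⟩
  intro s hNash
  by_contra hsa
  have : ∃ k, s k ≠ a k := by
    by_contra h
    push_neg at h
    exact hsa (funext h)
  -- take the least such k
  have hex : ∃ m : ℕ, ∃ h : m < n, s ⟨m, h⟩ ≠ a ⟨m, h⟩ := by
    obtain ⟨k, hk⟩ := this
    exact ⟨k.1, k.2, by simpa using hk⟩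
  classical
  obtain ⟨hm, hsm⟩ := Nat.find_spec hex
  set m := Nat.find hex
  have hearly : ∀ j, j < (⟨m, hm⟩ : Fin n) → s j = a j := by
    intro j hj
    by_contra hja
    have := Nat.find_min hex (m := j.1) hj
    push_neg at this
    exact hja (by simpa using this j.2)
  have := hdom ⟨m, hm⟩ s hearly hsm
  have := hNash ⟨m, hm⟩ (a ⟨m, hm⟩)
  linarith
end
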